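/- arXiv:2110.02534 — 3 statements merged into one kernel-verified Lean document; each statement's English description precedes it below -/
import Mathlib

section
/- In the full matrix algebra $\mathrm{M}_n(K)$ over a field $K$ with $\mathrm{char}(K)\neq 2$, the permutation matrix $P=E_{1,2}+E_{2,3}+\cdots+E_{n-1,n}+E_{n,1}$ and the matrix unit $E_{1,1}$ generate $\mathrm{M}_n(K)$ as a Lie algebra under the commutator bracket $[X,Y]=XY-YX$. -/
attribute [local instance 100] LieRing.ofAssociativeRing

/-!
Write `E i j` for the matrix units (indices mod `n`) and `P` for the cyclic shift, so that
`⁅P, E a b⁆ = E (a - 1) b - E a (b + 1)`. Bracketing `⁅P, E 0 0⁆ = E (-1) 0 - E 0 1` once more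
with `E 0 0` flips the sign of `E 0 1`, so halving the sum gives `E (-1) 0`; this is the only
place where `2` must be invertible. Then `⁅E (-1) 0, E 0 k⁆ - ⁅P, E 0 k⁆ = E 0 (k + 1)` walks
along row `0`, `⁅P, E i 0⁆ + ⁅E i 0, E 0 1⁆ = E (i - 1) 0` walks up column `0`, and
`⁅E i 0, E 0 j⁆` produces every other matrix unit.
-/

theorem Fin.induction_add_one {n : ℕ} [NeZero n] {p : Fin n → Prop} (zero : p 0)
    (add_one : ∀ i, p i → p (i + 1)) (i : Fin n) : p i := by
  obtain ⟨k, rfl⟩ := Nat.exists_eq_succ_of_ne_zero (NeZero.ne n)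
  induction i using Fin.induction with
  | zero => exact zero
  | succ i ih => exact Fin.coeSucc_eq_succ (a := i) ▸ add_one _ ih

namespace Matrix

def cyclicShift (n : ℕ) [NeZero n] (R : Type*) [Zero R] [One R] : Matrix (Fin n) (Fin n) R :=
  of fun i j => if j = i + 1 then 1 else 0

section Ring

variable {R : Type*} [Ring R]

theorem lie_single_single_of_ne {m : Type*} [Fintype m] [DecidableEq m] {i j l : m}
    (h : l ≠ i) (a b : R) : ⁅single i j a, single j l b⁆ = single i l (a * b) := by
  rw [Ring.lie_def, single_mul_single_same, single_mul_single_of_ne (h := h), sub_zero]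

theorem lie_single_single_self {m : Type*} [Fintype m] [DecidableEq m] (i j : m) (a b : R) :
    ⁅single i j a, single j i b⁆ = single i i (a * b) - single j j (b * a) := by
  rw [Ring.lie_def, single_mul_single_same, single_mul_single_same]

variable {n : ℕ} [NeZero n]

theorem cyclicShift_mul_single (a b : Fin n) (c : R) :
    cyclicShift n R * single a b c = single (a - 1) b c := by
  ext i j
  rw [mul_apply, Finset.sum_eq_single (i + 1)]
  · simp only [cyclicShift, of_apply, if_true, one_mul, single_apply, sub_eq_iff_eq_add]
  · intro k _ hk
    simp only [cyclicShift, of_apply, if_neg hk, zero_mul]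
  · exact fun h => absurd (Finset.mem_univ _) h

theorem single_mul_cyclicShift (a b : Fin n) (c : R) :
    single a b c * cyclicShift n R = single a (b + 1) c := by
  ext i j
  rw [mul_apply, Finset.sum_eq_single b]
  · simp only [cyclicShift, of_apply, single_apply, mul_ite, mul_one, mul_zero, eq_comm (a := j)]
    split_ifs <;> simp_all
  · intro k _ hk
    rw [single_apply_of_col_ne _ _ (Ne.symm hk), zero_mul]
  · exact fun h => absurd (Finset.mem_univ _) h

theorem cyclicShift_lie_single (a b : Fin n) (c : R) :
    ⁅cyclicShift n R, single a b c⁆ = single (a - 1) b c - single a (b + 1) c := by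
  rw [Ring.lie_def, cyclicShift_mul_single, single_mul_cyclicShift]

end Ring

section LieSubalgebra

variable {R : Type*} [CommRing R]

theorem eq_top_of_single_one_mem {m : Type*} [Fintype m] [DecidableEq m]
    (L : LieSubalgebra R (Matrix m m R)) (h : ∀ i j, single i j (1 : R) ∈ L) : L = ⊤ := by
  refine eq_top_iff.mpr fun x _ => x.induction_on' L.zero_mem (fun _ _ => L.add_mem) ?_
  intro i j c
  simpa [smul_single] using L.smul_mem c (h i j)

theorem single_one_mem_of_row_col {m : Type*} [Fintype m] [DecidableEq m]
    {L : LieSubalgebra R (Matrix m m R)} {o : m} (hrow : ∀ j, single o j (1 : R) ∈ L)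
    (hcol : ∀ i, single i o (1 : R) ∈ L) (i j : m) : single i j (1 : R) ∈ L := by
  have hlie := L.lie_mem (hcol i) (hrow j)
  obtain rfl | hij := eq_or_ne j i
  · rw [lie_single_single_self, mul_one] at hlie
    simpa using L.add_mem hlie (hrow o)
  · rwa [lie_single_single_of_ne hij, mul_one] at hlie

variable {n : ℕ} [NeZero n] {L : LieSubalgebra R (Matrix (Fin n) (Fin n) R)}

local notation "E" i:max j:max => (single i j (1 : R) : Matrix (Fin n) (Fin n) R)

variable (hP : cyclicShift n R ∈ L) (hE : single 0 0 (1 : R) ∈ L)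
include hP hE

theorem single_neg_one_zero_mem (h2 : IsUnit (2 : R)) : E (-1) 0 ∈ L := by
  by_cases h : (-1 : Fin n) = 0
  · rwa [h]
  have h1 : (1 : Fin n) ≠ 0 := fun h' => h (by rw [h', neg_zero])
  have hPE : ⁅cyclicShift n R, E 0 0⁆ = E (-1) 0 - E 0 1 := by
    rw [cyclicShift_lie_single, zero_sub, zero_add]
  have hPEE : ⁅⁅cyclicShift n R, E 0 0⁆, E 0 0⁆ = E (-1) 0 + E 0 1 := by
    rw [hPE, sub_lie, lie_single_single_of_ne (Ne.symm h), ← lie_skew,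
      lie_single_single_of_ne h1, mul_one, sub_neg_eq_add]
  have htwo : (2 : R) • E (-1) 0 ∈ L := by
    have := L.add_mem (L.lie_mem hP hE) (L.lie_mem (L.lie_mem hP hE) hE)
    rwa [hPEE, hPE, sub_add_add_cancel, ← two_smul R] at this
  simpa [smul_smul] using L.smul_mem (h2.unit⁻¹ : Rˣ) htwo

theorem single_zero_left_mem (hv : E (-1) 0 ∈ L) (j : Fin n) : E 0 j ∈ L := by
  induction j using Fin.induction_add_one with
  | zero => exact hE
  | add_one k hk =>
    by_cases h : k = -1
    · rwa [h, neg_add_cancel]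
    have hstep : ⁅E (-1) 0, E 0 k⁆ - ⁅cyclicShift n R, E 0 k⁆ = E 0 (k + 1) := by
      rw [lie_single_single_of_ne h, cyclicShift_lie_single, zero_sub, mul_one, sub_sub_cancel]
    exact hstep ▸ L.sub_mem (L.lie_mem hv hk) (L.lie_mem hP hk)

theorem single_zero_right_mem (hu : E 0 1 ∈ L) (i : Fin n) : E i 0 ∈ L := by
  suffices ∀ k : Fin n, E (-k) 0 ∈ L by simpa using this (-i)
  intro k
  induction k using Fin.induction_add_one with
  | zero => rwa [neg_zero]
  | add_one k hk =>
    by_cases h : -k = 1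
    · rwa [neg_add, h, add_neg_cancel]
    have hstep : ⁅cyclicShift n R, E (-k) 0⁆ + ⁅E (-k) 0, E 0 1⁆ = E (-(k + 1)) 0 := by
      rw [cyclicShift_lie_single, lie_single_single_of_ne (Ne.symm h), zero_add, mul_one,
        sub_add_cancel, neg_add, sub_eq_add_neg]
    exact hstep ▸ L.add_mem (L.lie_mem hP hk) (L.lie_mem hk hu)

end LieSubalgebra

end Matrix

/-- The cyclic permutation matrix `P = E₁₂ + E₂₃ + ⋯ + E_{n-1,n} + E_{n,1}` and the
matrix unit `E₁₁` generate `Mₙ(K)` as a Lie algebra under the commutator bracket,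
when `char K ≠ 2`. -/
theorem perm_and_E11_lie_generate (K : Type*) [Field K] (h2 : (2 : K) ≠ 0)
    (n : ℕ) [NeZero n] :
    LieSubalgebra.lieSpan K (Matrix (Fin n) (Fin n) K)
      {Matrix.of (fun i j : Fin n => if j = i + 1 then (1 : K) else 0),
       Matrix.single (0 : Fin n) (0 : Fin n) (1 : K)} = ⊤ := by
  set L := LieSubalgebra.lieSpan K _ {Matrix.cyclicShift n K, Matrix.single 0 0 (1 : K)}
  have hP : Matrix.cyclicShift n K ∈ L := LieSubalgebra.subset_lieSpan (Set.mem_insert _ _)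
  have hE : Matrix.single 0 0 (1 : K) ∈ L :=
    LieSubalgebra.subset_lieSpan (Set.mem_insert_of_mem _ rfl)
  have hrow := Matrix.single_zero_left_mem hP hE (Matrix.single_neg_one_zero_mem hP hE h2.isUnit)
  have hcol := Matrix.single_zero_right_mem hP hE (hrow 1)
  exact Matrix.eq_top_of_single_one_mem L (Matrix.single_one_mem_of_row_col hrow hcol)
end

section
/- In any associative ring $R$, for $r,x_1,\ldots,x_j\in R$, the left-normed commutator $[x_1,x_2,\ldots,x_j,r]_{j+1}$ can be written as a sum of $2^{j-1}$ terms of the form $\pm[r,x_{\pi(1)},\ldots,x_{\pi(j)}]_{j+1}$ where each $\pi$ is some permutation of $\{1,\ldots,j\}$; in particular, if $[r,y_1,\ldots,y_j]_{j+1}=0$ for all choices $y_1,\ldots,y_j$ from $\{x_1,\ldots,x_j\}$, then $[x_1,\ldots,x_j,r]_{j+1}=0$. -/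
/-- `lprod r [x₁, …, xₘ]` is the left-normed commutator `[r, x₁, …, xₘ]`. -/
def lprod {R : Type*} [Ring R] (r : R) (l : List R) : R :=
  l.foldl (fun a x => a * x - x * a) r

/-- `llc [x₁, …, xₘ]` is the left-normed commutator `[x₁, …, xₘ]ₘ` (and `0` on `[]`). -/
def llc {R : Type*} [Ring R] : List R → R
  | [] => 0
  | a :: t => lprod a t

/-!
Write `⁅a, b⁆ = a * b - b * a`. For `X = [x₁, …, x_k]` and `c = x_{k+1}` the Jacobi identity gives
`⁅a, ⁅X, c⁆⁆ = ⁅⁅a, X⁆, c⁆ - ⁅⁅a, c⁆, X⁆`, so by induction on `k` the bracket `⁅a, X⁆` is a sum of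
`2^(k-1)` terms `±[a, y₁, …, y_k]` with `y` a rearrangement of `x`: the first summand appends `c`
to each term for `a`, the second puts `c` in front of each term for `⁅a, c⁆`.
Then `[x₁, …, x_j, r] = -⁅r, [x₁, …, x_j]⁆`.
-/

theorem List.Perm.exists_eq_ofFn_comp {α : Type*} {n : ℕ} {l : List α} {x : Fin n → α}
    (h : l.Perm (List.ofFn x)) : ∃ σ : Equiv.Perm (Fin n), l = List.ofFn (x ∘ σ) := by
  classical
  have hlen : (List.ofFn x).length = l.length := h.length_eq.symm
  obtain rfl : l.length = n := by simpa using h.length_eq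
  refine ⟨⟨fun i => finCongr hlen (h.idxBij i), fun i => h.symm.idxBij (finCongr hlen.symm i),
    fun i => by simp [h.idxBij_symm_idxBij], fun i => by simp [h.idxBij_idxBij_symm]⟩, ?_⟩
  refine List.ext_getElem (by simp) fun i hi _ => ?_
  have := h.getElem_idxBij_eq_getElem ⟨i, hi⟩
  simp only [List.getElem_ofFn] at this ⊢
  exact this.symm

section

variable {R : Type*} [Ring R]

attribute [local instance] LieRing.ofAssociativeRing

theorem lprod_concat (a c : R) (l : List R) : lprod a (l ++ [c]) = ⁅lprod a l, c⁆ := by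
  simp [lprod, Ring.lie_def]

theorem llc_concat (c : R) {l : List R} (hl : l ≠ []) : llc (l ++ [c]) = ⁅llc l, c⁆ := by
  obtain ⟨b, t, rfl⟩ := List.exists_cons_of_ne_nil hl
  exact lprod_concat b c t

def IsSignedPermSum (N : ℕ) (a : R) (l : List R) (v : R) : Prop :=
  ∃ (ε : Fin N → ℤˣ) (L : Fin N → List R), (∀ m, (L m).Perm l) ∧ v = ∑ m, ε m • lprod a (L m)

namespace IsSignedPermSum

variable {N M : ℕ} {a : R} {l : List R} {v w : R}

theorem one_lprod (a : R) (l : List R) : IsSignedPermSum 1 a l (lprod a l) :=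
  ⟨1, fun _ => l, fun _ => .refl l, by simp⟩

theorem neg (h : IsSignedPermSum N a l v) : IsSignedPermSum N a l (-v) := by
  obtain ⟨ε, L, hL, rfl⟩ := h
  exact ⟨-ε, L, hL, by simp [Units.neg_smul]⟩

theorem add (hv : IsSignedPermSum N a l v) (hw : IsSignedPermSum M a l w) :
    IsSignedPermSum (N + M) a l (v + w) := by
  obtain ⟨ε, L, hL, rfl⟩ := hv
  obtain ⟨δ, K, hK, rfl⟩ := hw
  refine ⟨Fin.append ε δ, Fin.append L K, Fin.addCases (by simpa using hL) (by simpa using hK), ?_⟩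
  simp [Fin.sum_univ_add]

theorem lie_right (h : IsSignedPermSum N a l v) (c : R) :
    IsSignedPermSum N a (l ++ [c]) ⁅v, c⁆ := by
  obtain ⟨ε, L, hL, rfl⟩ := h
  refine ⟨ε, fun m => L m ++ [c], fun m => (hL m).append_right [c], ?_⟩
  simp only [lprod_concat, sum_lie, Units.smul_def, zsmul_lie]

theorem of_lie_left {c : R} (h : IsSignedPermSum N ⁅a, c⁆ l v) :
    IsSignedPermSum N a (l ++ [c]) v := by
  obtain ⟨ε, L, hL, rfl⟩ := h
  exact ⟨ε, fun m => c :: L m, fun m => ((hL m).cons c).trans (List.perm_append_singleton c l).symm,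
    rfl⟩

theorem exists_perm {n : ℕ} {x : Fin n → R} (h : IsSignedPermSum N a (List.ofFn x) v) :
    ∃ ε : Fin N → ℤ, ∃ π : Fin N → Equiv.Perm (Fin n), (∀ m, ε m = 1 ∨ ε m = -1) ∧
      v = ∑ m, ε m • lprod a (List.ofFn (x ∘ π m)) := by
  obtain ⟨ε, L, hL, rfl⟩ := h
  choose π hπ using fun m => (hL m).exists_eq_ofFn_comp
  exact ⟨fun m => ε m, π, fun m => Int.isUnit_iff.mp (ε m).isUnit,
    Finset.sum_congr rfl fun m _ => by rw [hπ m, Units.smul_def]⟩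

end IsSignedPermSum

theorem isSignedPermSum_lie_llc {l : List R} (hl : l ≠ []) (a : R) :
    IsSignedPermSum (2 ^ (l.length - 1)) a l ⁅a, llc l⁆ := by
  induction l using List.reverseRecOn generalizing a with
  | nil => exact absurd rfl hl
  | append_singleton l c ih =>
    rcases eq_or_ne l [] with rfl | hl'
    · exact IsSignedPermSum.one_lprod a [c]
    have hN : 2 ^ ((l ++ [c]).length - 1) = 2 ^ (l.length - 1) + 2 ^ (l.length - 1) := by
      rw [List.length_append, List.length_singleton, Nat.add_sub_cancel, ← two_mul, ← pow_succ',
        Nat.sub_add_cancel (List.length_pos_iff.mpr hl')]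
    rw [hN, llc_concat c hl', leibniz_lie, ← lie_skew (llc l) ⁅a, c⁆]
    exact ((ih hl' a).lie_right c).add (ih hl' ⁅a, c⁆).neg.of_lie_left

theorem isSignedPermSum_llc_concat {l : List R} (hl : l ≠ []) (r : R) :
    IsSignedPermSum (2 ^ (l.length - 1)) r l (llc (l ++ [r])) := by
  rw [llc_concat r hl, ← lie_skew]
  exact (isSignedPermSum_lie_llc hl r).neg

end

/-- In any associative ring, `[x₁, …, xⱼ, r]_{j+1}` is a sum of `2^{j-1}` terms of the
form `±[r, x_{π(1)}, …, x_{π(j)}]_{j+1}` for permutations `π`; in particular it vanishes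
whenever all the left-normed commutators starting with `r` with entries among the `xᵢ`
vanish. -/
theorem left_normed_comm_rewriting {R : Type*} [Ring R] {j : ℕ} (hj : 1 ≤ j)
    (r : R) (x : Fin j → R) :
    (∃ ε : Fin (2 ^ (j - 1)) → ℤ, ∃ π : Fin (2 ^ (j - 1)) → Equiv.Perm (Fin j),
      (∀ m, ε m = 1 ∨ ε m = -1) ∧
      llc (List.ofFn x ++ [r]) =
        ∑ m : Fin (2 ^ (j - 1)), ε m • lprod r (List.ofFn (x ∘ π m))) ∧
    ((∀ y : Fin j → R, (∀ i, ∃ i', y i = x i') → lprod r (List.ofFn y) = 0) →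
      llc (List.ofFn x ++ [r]) = 0) := by
  have hx : List.ofFn x ≠ [] := List.ne_nil_of_length_pos (by rw [List.length_ofFn]; omega)
  have hsum := isSignedPermSum_llc_concat hx r
  rw [List.length_ofFn] at hsum
  obtain ⟨ε, π, hε, heq⟩ := hsum.exists_perm
  refine ⟨⟨ε, π, hε, heq⟩, fun hy => ?_⟩
  rw [heq]
  exact Finset.sum_eq_zero fun m _ => by rw [hy (x ∘ π m) fun i => ⟨π m i, rfl⟩, smul_zero]
end

section
/- Let $R$ be a finite-dimensional associative unital algebra over a field $K$ with $\dim_K R=d$. If a subset $H\subseteq R$ is $\omega$-Lie-nilpotent (i.e., $H\subseteq\mathrm{L}_\omega(H)$), then $H$ is Lie-nilpotent of index $d$ (i.e., $H\subseteq\mathrm{L}_d(H)$). -/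
/-- The `k`-th Lie centralizer of a subset `H` of `R`:
`Lcen k H = {r : R | [r, x₁, …, x_k]_{k+1} = 0 for all xᵢ ∈ H}`. -/
def Lcen {R : Type*} [Ring R] (k : ℕ) (H : Set R) : Set R :=
  {r : R | ∀ x : Fin k → R, (∀ i, x i ∈ H) → lprod r (List.ofFn x) = 0}

/-!
The sets `Lcen k H` are `K`-subspaces with `Lcen 0 H = 0`, and `Lcen (k + 1) H` consists of the
`r` with `[r, x] ∈ Lcen k H` for all `x ∈ H`; so each term of the ascending chain
`Lcen 0 H ⊆ Lcen 1 H ⊆ ⋯` is a fixed monotone operator applied to the previous one. Such a chain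
is constant as soon as two consecutive terms agree, and before that the dimension grows at every
step; hence it is constant from step `d = dim R` on, and every `Lcen k H` lies in `Lcen d H`.
-/

open Function Module

namespace Submodule

variable {K M : Type*} [DivisionRing K] [AddCommGroup M] [Module K M] [FiniteDimensional K M]
  {P : Submodule K M → Submodule K M}

theorem isFixedPt_or_le_finrank_iterate_bot (hP : Monotone P) (n : ℕ) :
    IsFixedPt P (P^[n] ⊥) ∨ n ≤ finrank K (P^[n] ⊥) := by
  induction n with
  | zero => exact .inr (Nat.zero_le _)
  | succ n ih =>
    have hle : P^[n] ⊥ ≤ P^[n + 1] ⊥ := hP.monotone_iterate_of_le_map bot_le n.le_succ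
    rw [iterate_succ_apply'] at hle ⊢
    rcases ih with hfix | hn
    · exact .inl hfix.apply
    rcases hle.lt_or_eq with hlt | heq
    · exact .inr (hn.trans_lt (finrank_lt_finrank_of_lt hlt))
    · exact .inl (congrArg P heq.symm)

theorem isFixedPt_iterate_finrank_bot (hP : Monotone P) :
    IsFixedPt P (P^[finrank K M] ⊥) := by
  rcases isFixedPt_or_le_finrank_iterate_bot hP (finrank K M) with hfix | hn
  · exact hfix
  have htop : P^[finrank K M] ⊥ = ⊤ := eq_top_of_finrank_eq ((finrank_le _).antisymm hn)
  have hle : P^[finrank K M] ⊥ ≤ P (P^[finrank K M] ⊥) := by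
    simpa only [iterate_succ_apply'] using hP.monotone_iterate_of_le_map bot_le (Nat.le_succ _)
  rw [htop] at hle ⊢
  exact top_le_iff.1 hle

theorem iterate_bot_le_iterate_finrank_bot (hP : Monotone P) (k : ℕ) :
    P^[k] ⊥ ≤ P^[finrank K M] ⊥ := by
  rcases le_total k (finrank K M) with hk | hk
  · exact hP.monotone_iterate_of_le_map bot_le hk
  · obtain ⟨j, rfl⟩ := Nat.exists_eq_add_of_le hk
    rw [add_comm, iterate_add_apply, ((isFixedPt_iterate_finrank_bot hP).iterate j).eq]

end Submodule

section Lcen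

variable {R : Type*} [Ring R]

theorem lprod_nil (r : R) : lprod r [] = r := rfl

theorem lprod_cons (r x : R) (l : List R) : lprod r (x :: l) = lprod (r * x - x * r) l := rfl

theorem Lcen_zero (H : Set R) : Lcen 0 H = {0} := by
  ext r
  simp [Lcen, lprod_nil]

theorem mem_Lcen_succ {k : ℕ} {H : Set R} {r : R} :
    r ∈ Lcen (k + 1) H ↔ ∀ x ∈ H, r * x - x * r ∈ Lcen k H := by
  constructor
  · intro hr x hx y hy
    simpa only [List.ofFn_succ, Fin.cons_zero, Fin.cons_succ, lprod_cons] using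
      hr (Fin.cons x y) (Fin.cases hx hy)
  · intro hr y hy
    rw [List.ofFn_succ, lprod_cons]
    exact hr (y 0) (hy 0) _ fun i => hy i.succ

variable (K : Type*) [CommRing K] [Algebra K R] (H : Set R)

def lcenStep (W : Submodule K R) : Submodule K R :=
  ⨅ x ∈ H, W.comap (LinearMap.mulRight K x - LinearMap.mulLeft K x)

theorem lcenStep_monotone : Monotone (lcenStep K H) :=
  fun _ _ hW => iInf₂_mono fun _ _ => Submodule.comap_mono hW

theorem Lcen_eq_iterate_lcenStep (k : ℕ) : Lcen k H = ((lcenStep K H)^[k] ⊥ : Submodule K R) := by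
  induction k with
  | zero => simp [Lcen_zero]
  | succ k ih =>
    ext r
    rw [mem_Lcen_succ, iterate_succ_apply', ih]
    simp [lcenStep]

end Lcen

/-- In a finite-dimensional algebra of dimension `d`, an ω-Lie-nilpotent subset is
Lie-nilpotent of index `d`. -/
theorem omega_lie_nilpotent_imp_index_d {K : Type*} [Field K] {R : Type*} [Ring R]
    [Algebra K R] [FiniteDimensional K R] {d : ℕ} (hd : Module.finrank K R = d)
    (H : Set R) (h : H ⊆ ⋃ k : ℕ, ⋃ (_ : 1 ≤ k), Lcen k H) :
    H ⊆ Lcen d H := by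
  intro r hr
  obtain ⟨k, -, hk⟩ : ∃ k, 1 ≤ k ∧ r ∈ Lcen k H := by simpa using h hr
  subst hd
  rw [Lcen_eq_iterate_lcenStep K] at hk ⊢
  exact Submodule.iterate_bot_le_iterate_finrank_bot (lcenStep_monotone K H) k hk
end
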